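/- arXiv:1207.1643 — 5 statements merged into one kernel-verified Lean document; each statement's English description precedes it below -/
import Mathlib

section
/- Let dA denote the surface measure on the unit sphere S² ⊂ ℝ³ (with total mass 4π), and let ρ : S² → [0, ∞) be integrable with ∫_{S²} ρ dA = 1. Define Q = ∫_{S²} (p ⊗ p − (1/3)I) ρ(p) dA(p). Then for every unit vector e ∈ ℝ³ one has the strict bounds −1/3 < eᵀQe < 2/3; equivalently, every eigenvalue of Q lies in the open interval (−1/3, 2/3). -/
open MeasureTheory

/-- The surface measure `dA` on the unit sphere `S² ⊂ ℝ³` (of total mass `4π`),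
obtained by disintegrating the Lebesgue measure of `ℝ³` in polar coordinates. -/
noncomputable def sphereSurfaceMeasure :
    Measure (Metric.sphere (0 : EuclideanSpace ℝ (Fin 3)) 1) :=
  (volume : Measure (EuclideanSpace ℝ (Fin 3))).toSphere

/-!
Since `∫ ρ dA = 1`, the quadratic form is `eᵀ Q e = ∫ ⟪e, p⟫² ρ dA - 1/3`, and `0 ≤ ⟪e, p⟫² ≤ 1`
on the sphere. Both bounds are strict: `⟪e, p⟫²` vanishes only on the great circle `e^⊥` and
equals `1` only at `±e`, and each of these lies in a proper subspace, hence is `dA`-null, while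
`ρ ≥ 0` is not a.e. zero.
-/

open Module Metric RealInnerProductSpace

namespace MeasureTheory

namespace Measure

-- `μ.toSphere s` is a multiple of the `μ`-measure of the cone `(0, 1) • s`, which lies in `W`.
theorem toSphere_coe_mem_eq_zero {E : Type*} [NormedAddCommGroup E]
    [NormedSpace ℝ E] [FiniteDimensional ℝ E] [MeasurableSpace E] [BorelSpace E] (μ : Measure E)
    [μ.IsAddHaarMeasure] {W : Submodule ℝ E} (hW : W ≠ ⊤) :
    μ.toSphere {p : sphere (0 : E) 1 | (p : E) ∈ W} = 0 := by
  have hmeas : MeasurableSet {p : sphere (0 : E) 1 | (p : E) ∈ W} :=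
    (W.closed_of_finiteDimensional.preimage continuous_subtype_val).measurableSet
  rw [μ.toSphere_apply' hmeas]
  refine mul_eq_zero_of_right _ (measure_mono_null ?_ (Measure.addHaar_submodule μ W hW))
  rintro _ ⟨c, -, _, ⟨p, hp, rfl⟩, rfl⟩
  exact W.smul_mem c hp

section InnerProductSpace

variable {E : Type*} [NormedAddCommGroup E] [InnerProductSpace ℝ E] [FiniteDimensional ℝ E]
  [MeasurableSpace E] [BorelSpace E] (μ : Measure E) [μ.IsAddHaarMeasure]

theorem ae_toSphere_inner_ne_zero {e : E} (he : e ≠ 0) :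
    ∀ᵐ p : sphere (0 : E) 1 ∂μ.toSphere, ⟪e, (p : E)⟫ ≠ 0 := by
  refine measure_mono_null (fun p hp => ?_) (μ.toSphere_coe_mem_eq_zero (W := (ℝ ∙ e)ᗮ) ?_)
  · exact Submodule.mem_orthogonal_singleton_iff_inner_right.mpr (not_not.mp hp)
  · rw [Ne, Submodule.orthogonal_eq_top_iff, Submodule.span_singleton_eq_bot]
    exact he

theorem ae_toSphere_sq_inner_lt_one (hE : 1 < finrank ℝ E) {e : E}
    (he : ‖e‖ = 1) : ∀ᵐ p : sphere (0 : E) 1 ∂μ.toSphere, ⟪e, (p : E)⟫ ^ 2 < 1 := by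
  have he0 : e ≠ 0 := norm_ne_zero_iff.mp (by rw [he]; exact one_ne_zero)
  refine measure_mono_null (fun p hp => ?_) (μ.toSphere_coe_mem_eq_zero (W := ℝ ∙ e) ?_)
  · have hp1 : ‖(p : E)‖ = 1 := norm_eq_of_mem_sphere p
    have hle : |⟪e, (p : E)⟫| ≤ 1 := by
      simpa [he, hp1] using abs_real_inner_le_norm e p
    have heq : ‖⟪e, (p : E)⟫‖ = ‖e‖ * ‖(p : E)‖ := by
      rw [he, hp1, one_mul, Real.norm_eq_abs]
      have hge : 1 ≤ ⟪e, (p : E)⟫ ^ 2 := not_lt.mp hp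
      nlinarith [abs_nonneg ⟪e, (p : E)⟫, sq_abs ⟪e, (p : E)⟫]
    obtain ⟨r, -, hr⟩ := (norm_inner_eq_norm_iff he0 (ne_zero_of_mem_unit_sphere p)).mp heq
    exact Submodule.mem_span_singleton.mpr ⟨r, hr.symm⟩
  · intro htop
    have := finrank_span_singleton (K := ℝ) he0
    rw [htop, finrank_top] at this
    omega

end InnerProductSpace

end Measure

theorem integral_mul_pos_of_ae_pos {α : Type*} [MeasurableSpace α] {μ : Measure α}
    {g ρ : α → ℝ} (hgρ : Integrable (fun p => g p * ρ p) μ) (hg : ∀ᵐ p ∂μ, 0 < g p)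
    (hρ0 : 0 ≤ᵐ[μ] ρ) (hρ : ∫ p, ρ p ∂μ ≠ 0) : 0 < ∫ p, g p * ρ p ∂μ := by
  have hgρ0 : 0 ≤ᵐ[μ] fun p => g p * ρ p := by
    filter_upwards [hg, hρ0] with p hgp hρp using mul_nonneg hgp.le hρp
  refine (integral_nonneg_of_ae hgρ0).lt_of_ne fun h => hρ ?_
  have hzero := (integral_eq_zero_iff_of_nonneg_ae hgρ0 hgρ).mp h.symm
  refine integral_eq_zero_of_ae ?_
  filter_upwards [hzero, hg] with p hp hgp
  exact (mul_eq_zero.mp hp).resolve_left hgp.ne'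

theorem sum_sum_mul_integral_mul {α ι : Type*} [MeasurableSpace α] [Fintype ι] {μ : Measure α}
    {M : ι → ι → α → ℝ} (hM : ∀ i j, Integrable (M i j) μ) (e : ι → ℝ) :
    ∑ i, ∑ j, e i * (∫ p, M i j p ∂μ) * e j = ∫ p, ∑ i, ∑ j, e i * M i j p * e j ∂μ := by
  have hint : ∀ i j, Integrable (fun p => e i * M i j p * e j) μ :=
    fun i j => ((hM i j).const_mul (e i)).mul_const (e j)
  rw [integral_finsetSum _ fun i _ => integrable_finsetSum _ fun j _ => hint i j]
  refine Finset.sum_congr rfl fun i _ => ?_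
  rw [integral_finsetSum _ fun j _ => hint i j]
  refine Finset.sum_congr rfl fun j _ => ?_
  rw [integral_mul_const, integral_const_mul]

theorem EuclideanSpace.sum_sum_mul_outer_sub_diag_mul {ι : Type*} [Fintype ι] [DecidableEq ι]
    (e x : EuclideanSpace ℝ ι) (c r : ℝ) :
    ∑ i, ∑ j, e i * ((x i * x j - c * if i = j then 1 else 0) * r) * e j
      = (⟪e, x⟫ ^ 2 - c * ‖e‖ ^ 2) * r := by
  have hinner : ⟪e, x⟫ = ∑ i, e i * x i := by
    simp [PiLp.inner_apply, mul_comm]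
  rw [hinner, EuclideanSpace.norm_sq_eq, sq, Finset.sum_mul_sum]
  simp only [mul_sub, sub_mul, Finset.sum_sub_distrib, mul_ite, mul_one, mul_zero, ite_mul,
    zero_mul, Finset.sum_ite_eq, Finset.mem_univ, if_true, Real.norm_eq_abs, sq_abs,
    Finset.sum_mul, Finset.mul_sum]
  congr 1
  · refine Finset.sum_congr rfl fun i _ => Finset.sum_congr rfl fun j _ => by ring
  · refine Finset.sum_congr rfl fun i _ => by ring

theorem Integrable.continuous_mul_of_compactSpace {X R : Type*}
    [TopologicalSpace X] [CompactSpace X] [T2Space X] [MeasurableSpace X] [OpensMeasurableSpace X]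
    [NormedRing R] [SecondCountableTopologyEither X R] {μ : Measure X} {g f : X → R}
    (hg : Continuous g) (hf : Integrable f μ) : Integrable (fun x => g x * f x) μ := by
  simpa only [integrableOn_univ] using
    hf.integrableOn.continuousOn_mul hg.continuousOn isCompact_univ

end MeasureTheory

/-- If `ρ : S² → [0, ∞)` is integrable with `∫ ρ dA = 1` and
`Q = ∫ (p ⊗ p - (1/3) I) ρ(p) dA(p)`, then for every unit vector `e ∈ ℝ³` one has the
strict bounds `-1/3 < eᵀ Q e < 2/3` (equivalently, every eigenvalue of `Q` lies in
the open interval `(-1/3, 2/3)`). -/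
theorem qTensor_strict_quadratic_form_bounds
    (ρ : Metric.sphere (0 : EuclideanSpace ℝ (Fin 3)) 1 → ℝ)
    (hρint : Integrable ρ sphereSurfaceMeasure)
    (hρ0 : ∀ p, 0 ≤ ρ p)
    (hρ1 : ∫ p, ρ p ∂sphereSurfaceMeasure = 1)
    (Q : Matrix (Fin 3) (Fin 3) ℝ)
    (hQ : ∀ i j, Q i j =
      ∫ p : Metric.sphere (0 : EuclideanSpace ℝ (Fin 3)) 1,
        ((p : EuclideanSpace ℝ (Fin 3)) i * (p : EuclideanSpace ℝ (Fin 3)) j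
          - (1 / 3) * (if i = j then (1 : ℝ) else 0)) * ρ p ∂sphereSurfaceMeasure) :
    ∀ e : EuclideanSpace ℝ (Fin 3), ‖e‖ = 1 →
      -(1 / 3) < ∑ i, ∑ j, e i * Q i j * e j ∧
        ∑ i, ∑ j, e i * Q i j * e j < 2 / 3 := by
  intro e he
  have he0 : e ≠ 0 := norm_ne_zero_iff.mp (by rw [he]; exact one_ne_zero)
  set c : sphere (0 : EuclideanSpace ℝ (Fin 3)) 1 → ℝ :=
    fun p => ⟪e, (p : EuclideanSpace ℝ (Fin 3))⟫ ^ 2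
  have hcρ : Integrable (fun p => c p * ρ p) sphereSurfaceMeasure :=
    Integrable.continuous_mul_of_compactSpace (by fun_prop) hρint
  have hQe : ∑ i, ∑ j, e i * Q i j * e j = ∫ p, (c p - 1 / 3) * ρ p ∂sphereSurfaceMeasure := by
    simp_rw [hQ]
    rw [sum_sum_mul_integral_mul fun i j => Integrable.continuous_mul_of_compactSpace
      (by fun_prop) hρint]
    simp_rw [EuclideanSpace.sum_sum_mul_outer_sub_diag_mul, he, one_pow, mul_one]
    rfl
  have hρ_ne : ∫ p, ρ p ∂sphereSurfaceMeasure ≠ 0 := by rw [hρ1]; exact one_ne_zero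
  have hlow : 0 < ∫ p, c p * ρ p ∂sphereSurfaceMeasure :=
    integral_mul_pos_of_ae_pos hcρ
      ((volume.ae_toSphere_inner_ne_zero he0).mono fun p hp => pow_two_pos_of_ne_zero hp)
      (ae_of_all _ hρ0) hρ_ne
  have hup : 0 < ∫ p, (1 - c p) * ρ p ∂sphereSurfaceMeasure :=
    integral_mul_pos_of_ae_pos (Integrable.continuous_mul_of_compactSpace (by fun_prop) hρint)
      ((volume.ae_toSphere_sq_inner_lt_one (by simp) he).mono fun p hp => sub_pos.mpr hp)
      (ae_of_all _ hρ0) hρ_ne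
  simp_rw [sub_mul] at hQe hup
  rw [integral_sub hcρ (hρint.const_mul _), integral_const_mul, hρ1] at hQe
  rw [integral_sub (hρint.const_mul _) hcρ, integral_const_mul, hρ1] at hup
  constructor <;> linarith
end

section
/- Define the Ball–Majumdar potential f on symmetric traceless 3×3 matrices by f(Q) = inf { ∫_{S²} ρ(p) log ρ(p) dA(p) : ρ ∈ A_Q }, where A_Q = { ρ : S² → [0,∞) integrable with ∫_{S²} ρ dA = 1 and ∫_{S²} (p ⊗ p − (1/3)I) ρ(p) dA(p) = Q }, with the convention that the infimum over the empty set is +∞. Then f is convex: for all symmetric traceless Q₁, Q₂ and all t ∈ [0,1], f(t Q₁ + (1−t) Q₂) ≤ t f(Q₁) + (1−t) f(Q₂) in the extended reals. -/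
open MeasureTheory

attribute [local instance] Classical.propDecidable

/-- The entropy `∫ ρ log ρ dA`, as an extended real number.  For integrable `ρ ≥ 0`
with `∫ ρ dA = 1` the negative part of `ρ log ρ` is always integrable (since
`x log x ≥ -1/e`), so the integral is well defined with values in `(-∞, +∞]`:
it is `+∞` exactly when `ρ log ρ` fails to be (Bochner) integrable. -/
noncomputable def sphereEntropy
    (ρ : Metric.sphere (0 : EuclideanSpace ℝ (Fin 3)) 1 → ℝ) : EReal :=
  if Integrable (fun p => ρ p * Real.log (ρ p)) sphereSurfaceMeasure then
    ((∫ p, ρ p * Real.log (ρ p) ∂sphereSurfaceMeasure : ℝ) : EReal)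
  else ⊤

/-- The admissible class `A_Q`: integrable probability densities `ρ ≥ 0` on the sphere
whose normalized second moment tensor `∫ (p ⊗ p - (1/3)I) ρ dA` equals `Q`. -/
def admissibleDensities (Q : Matrix (Fin 3) (Fin 3) ℝ) :
    Set (Metric.sphere (0 : EuclideanSpace ℝ (Fin 3)) 1 → ℝ) :=
  {ρ | Integrable ρ sphereSurfaceMeasure ∧ (∀ p, 0 ≤ ρ p) ∧
    (∫ p, ρ p ∂sphereSurfaceMeasure) = 1 ∧
    ∀ i j, Q i j =
      ∫ p : Metric.sphere (0 : EuclideanSpace ℝ (Fin 3)) 1,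
        ((p : EuclideanSpace ℝ (Fin 3)) i * (p : EuclideanSpace ℝ (Fin 3)) j
          - (1 / 3) * (if i = j then (1 : ℝ) else 0)) * ρ p ∂sphereSurfaceMeasure}

/-- The Ball–Majumdar singular bulk potential
`f(Q) = inf { ∫ ρ log ρ dA : ρ ∈ A_Q }`, with values in the extended reals
(the infimum over the empty set being `+∞`). -/
noncomputable def ballMajumdarPotential (Q : Matrix (Fin 3) (Fin 3) ℝ) : EReal :=
  sInf (sphereEntropy '' admissibleDensities Q)

/-!
The constraints defining `A_Q` are linear in `ρ`, so `t ρ₁ + (1 - t) ρ₂ ∈ A_{t Q₁ + (1 - t) Q₂}`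
whenever `ρᵢ ∈ A_{Qᵢ}`, and the entropy of this mixture is at most `t S(ρ₁) + (1 - t) S(ρ₂)` by
convexity of `x ↦ x log x`; taking infima over `ρ₁` and `ρ₂` gives the claim. Taking infima is
legitimate in `EReal` because `x log x ≥ x - 1` bounds `f` below by `1 - 4π`, so
`t f(Q₁) + (1 - t) f(Q₂)` never meets `⊤ + ⊥`.
-/

open Real Set

namespace EReal

lemma coe_mul_ne_bot_of_pos {a : ℝ} (ha : 0 < a) {x : EReal} (hx : x ≠ ⊥) :
    (a : EReal) * x ≠ ⊥ :=
  (mul_ne_bot _ _).2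
    ⟨.inl (coe_ne_bot a), .inr hx, .inl (coe_ne_top a), .inl (EReal.coe_nonneg.2 ha.le)⟩

lemma exists_mem_coe_mul_lt_of_coe_mul_sInf_lt {S : Set EReal} {a : ℝ} (ha : 0 < a) {c : EReal}
    (h : a * sInf S < c) : ∃ x ∈ S, a * x < c := by
  rw [mul_comm, ← lt_div_iff (EReal.coe_pos.2 ha) (coe_ne_top a), sInf_lt_iff] at h
  obtain ⟨x, hx, hxc⟩ := h
  exact ⟨x, hx, by rwa [mul_comm, ← lt_div_iff (EReal.coe_pos.2 ha) (coe_ne_top a)]⟩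

lemma le_coe_mul_sInf_add_coe_mul_sInf {S T : Set EReal} {a b : ℝ} (ha : 0 < a) (hb : 0 < b)
    (hS : sInf S ≠ ⊥) (hT : sInf T ≠ ⊥) {c : EReal}
    (h : ∀ x ∈ S, ∀ y ∈ T, c ≤ a * x + b * y) :
    c ≤ a * sInf S + b * sInf T := by
  refine le_add_of_forall_gt (.inl (coe_mul_ne_bot_of_pos ha hS))
    (.inr (coe_mul_ne_bot_of_pos hb hT)) fun c₁ hc₁ c₂ hc₂ ↦ ?_
  obtain ⟨x, hx, hxc⟩ := exists_mem_coe_mul_lt_of_coe_mul_sInf_lt ha hc₁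
  obtain ⟨y, hy, hyc⟩ := exists_mem_coe_mul_lt_of_coe_mul_sInf_lt hb hc₂
  exact (h x hx y hy).trans (add_le_add hxc.le hyc.le)

end EReal

lemma Real.mul_log_mul_add_mul_le {x y a b : ℝ} (hx : 0 ≤ x) (hy : 0 ≤ y) (ha : 0 ≤ a) (hb : 0 ≤ b)
    (hab : a + b = 1) :
    (a * x + b * y) * log (a * x + b * y) ≤ a * (x * log x) + b * (y * log y) := by
  simpa only [smul_eq_mul] using convexOn_mul_log.2 (mem_Ici.2 hx) (mem_Ici.2 hy) ha hb hab

namespace MeasureTheory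

variable {α : Type*} [MeasurableSpace α] {μ : Measure α}

lemma Integrable.continuous_mul_of_compactSpace_s5 [TopologicalSpace α] [CompactSpace α]
    [OpensMeasurableSpace α] {k f : α → ℝ} (hk : Continuous k) (hf : Integrable f μ) :
    Integrable (fun x ↦ k x * f x) μ := by
  obtain ⟨C, hC⟩ := isCompact_univ.exists_bound_of_continuousOn hk.continuousOn
  exact hf.bdd_mul hk.aestronglyMeasurable (.of_forall fun x ↦ hC x (mem_univ x))

variable [IsFiniteMeasure μ] {f g : α → ℝ} {a b : ℝ}

lemma integral_sub_measureReal_le_integral_mul_log (hf₀ : 0 ≤ f) (hf : Integrable f μ)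
    (hfl : Integrable (fun x ↦ f x * log (f x)) μ) :
    ∫ x, f x ∂μ - μ.real univ ≤ ∫ x, f x * log (f x) ∂μ := by
  have : ∫ x, (f x - 1) ∂μ ≤ ∫ x, f x * log (f x) ∂μ :=
    integral_mono (hf.sub (integrable_const 1)) hfl fun x ↦ self_sub_one_le_mul_log (hf₀ x)
  rwa [integral_sub hf (integrable_const 1), integral_const, smul_eq_mul, mul_one] at this

section Mixture

variable (hf₀ : 0 ≤ f) (hg₀ : 0 ≤ g) (hf : Integrable f μ) (hg : Integrable g μ)
  (hfl : Integrable (fun x ↦ f x * log (f x)) μ) (hgl : Integrable (fun x ↦ g x * log (g x)) μ)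
  (ha : 0 ≤ a) (hb : 0 ≤ b) (hab : a + b = 1)
include hf₀ hg₀ hf hg hfl hgl ha hb hab

lemma Integrable.mul_log_smul_add_smul :
    Integrable (fun x ↦ (a • f + b • g) x * log ((a • f + b • g) x)) μ := by
  have hh : Integrable (a • f + b • g) μ := (hf.smul a).add (hg.smul b)
  -- bounded below by `x - 1 ≤ x log x`, above by convexity of `x log x`
  refine integrable_of_le_of_le (continuous_mul_log.comp_aestronglyMeasurable hh.1)
    (.of_forall fun x ↦ self_sub_one_le_mul_log ?_)
    (.of_forall fun x ↦ mul_log_mul_add_mul_le (hf₀ x) (hg₀ x) ha hb hab)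
    (hh.sub (integrable_const 1)) ((hfl.const_mul a).add (hgl.const_mul b))
  exact add_nonneg (mul_nonneg ha (hf₀ x)) (mul_nonneg hb (hg₀ x))

lemma integral_mul_log_smul_add_smul_le :
    ∫ x, (a • f + b • g) x * log ((a • f + b • g) x) ∂μ ≤
      a * ∫ x, f x * log (f x) ∂μ + b * ∫ x, g x * log (g x) ∂μ := calc
  _ ≤ ∫ x, a * (f x * log (f x)) + b * (g x * log (g x)) ∂μ :=
    integral_mono (.mul_log_smul_add_smul hf₀ hg₀ hf hg hfl hgl ha hb hab)
      ((hfl.const_mul a).add (hgl.const_mul b))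
      fun x ↦ mul_log_mul_add_mul_le (hf₀ x) (hg₀ x) ha hb hab
  _ = _ := by
    rw [integral_add (hfl.const_mul a) (hgl.const_mul b), integral_const_mul, integral_const_mul]

end Mixture

end MeasureTheory

local notation "S²" => Metric.sphere (0 : EuclideanSpace ℝ (Fin 3)) 1

instance : IsFiniteMeasure sphereSurfaceMeasure := by
  unfold sphereSurfaceMeasure
  infer_instance

lemma sphereEntropy_ne_bot (ρ : S² → ℝ) : sphereEntropy ρ ≠ ⊥ := by
  unfold sphereEntropy
  split_ifs <;> simp

lemma coe_integral_sub_le_sphereEntropy {ρ : S² → ℝ} (hρ : Integrable ρ sphereSurfaceMeasure)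
    (hρ₀ : 0 ≤ ρ) :
    ((∫ p, ρ p ∂sphereSurfaceMeasure - sphereSurfaceMeasure.real univ : ℝ) : EReal) ≤
      sphereEntropy ρ := by
  unfold sphereEntropy
  split_ifs with hρl
  · exact EReal.coe_le_coe_iff.2 (integral_sub_measureReal_le_integral_mul_log hρ₀ hρ hρl)
  · exact le_top

lemma sphereEntropy_smul_add_smul_le {ρ₁ ρ₂ : S² → ℝ} (hρ₁ : Integrable ρ₁ sphereSurfaceMeasure)
    (hρ₂ : Integrable ρ₂ sphereSurfaceMeasure) (hρ₁₀ : 0 ≤ ρ₁) (hρ₂₀ : 0 ≤ ρ₂) {a b : ℝ}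
    (ha : 0 < a) (hb : 0 < b) (hab : a + b = 1) :
    sphereEntropy (a • ρ₁ + b • ρ₂) ≤ a * sphereEntropy ρ₁ + b * sphereEntropy ρ₂ := by
  by_cases hρ₁l : Integrable (fun p ↦ ρ₁ p * log (ρ₁ p)) sphereSurfaceMeasure
  · by_cases hρ₂l : Integrable (fun p ↦ ρ₂ p * log (ρ₂ p)) sphereSurfaceMeasure
    · rw [sphereEntropy, sphereEntropy, sphereEntropy, if_pos hρ₁l, if_pos hρ₂l,
        if_pos (.mul_log_smul_add_smul hρ₁₀ hρ₂₀ hρ₁ hρ₂ hρ₁l hρ₂l ha.le hb.le hab)]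
      exact_mod_cast
        integral_mul_log_smul_add_smul_le hρ₁₀ hρ₂₀ hρ₁ hρ₂ hρ₁l hρ₂l ha.le hb.le hab
    · rw [show sphereEntropy ρ₂ = ⊤ from if_neg hρ₂l, EReal.coe_mul_top_of_pos hb,
        EReal.add_top_of_ne_bot (EReal.coe_mul_ne_bot_of_pos ha (sphereEntropy_ne_bot ρ₁))]
      exact le_top
  · rw [show sphereEntropy ρ₁ = ⊤ from if_neg hρ₁l, EReal.coe_mul_top_of_pos ha,
      EReal.top_add_of_ne_bot (EReal.coe_mul_ne_bot_of_pos hb (sphereEntropy_ne_bot ρ₂))]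
    exact le_top

lemma smul_add_smul_mem_admissibleDensities {Q₁ Q₂ : Matrix (Fin 3) (Fin 3) ℝ} {ρ₁ ρ₂ : S² → ℝ}
    (h₁ : ρ₁ ∈ admissibleDensities Q₁) (h₂ : ρ₂ ∈ admissibleDensities Q₂) {a b : ℝ}
    (ha : 0 ≤ a) (hb : 0 ≤ b) (hab : a + b = 1) :
    a • ρ₁ + b • ρ₂ ∈ admissibleDensities (a • Q₁ + b • Q₂) := by
  obtain ⟨hρ₁, hρ₁₀, hρ₁m, hQ₁⟩ := h₁
  obtain ⟨hρ₂, hρ₂₀, hρ₂m, hQ₂⟩ := h₂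
  refine ⟨(hρ₁.smul a).add (hρ₂.smul b),
    fun p ↦ add_nonneg (mul_nonneg ha (hρ₁₀ p)) (mul_nonneg hb (hρ₂₀ p)), ?_, fun i j ↦ ?_⟩
  · simp only [Pi.add_apply, Pi.smul_apply, smul_eq_mul]
    rw [integral_add (hρ₁.const_mul a) (hρ₂.const_mul b), integral_const_mul, integral_const_mul,
      hρ₁m, hρ₂m, mul_one, mul_one, hab]
  · have hk : Continuous fun p : S² ↦ (p : EuclideanSpace ℝ (Fin 3)) i *
        (p : EuclideanSpace ℝ (Fin 3)) j - 1 / 3 * if i = j then (1 : ℝ) else 0 := by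
      fun_prop
    have hk₁ := (hρ₁.continuous_mul_of_compactSpace_s5 hk).const_mul a
    have hk₂ := (hρ₂.continuous_mul_of_compactSpace_s5 hk).const_mul b
    simp only [Pi.add_apply, Pi.smul_apply, smul_eq_mul, Matrix.add_apply, Matrix.smul_apply,
      mul_add, mul_left_comm _ a, mul_left_comm _ b]
    rw [integral_add hk₁ hk₂, integral_const_mul, integral_const_mul, hQ₁ i j, hQ₂ i j]

lemma ballMajumdarPotential_ne_bot (Q : Matrix (Fin 3) (Fin 3) ℝ) :
    ballMajumdarPotential Q ≠ ⊥ := by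
  refine ne_bot_of_le_ne_bot (EReal.coe_ne_bot (1 - sphereSurfaceMeasure.real univ))
    (le_sInf ?_)
  rintro _ ⟨ρ, ⟨hρ, hρ₀, hρm, -⟩, rfl⟩
  simpa only [hρm] using coe_integral_sub_le_sphereEntropy hρ hρ₀

theorem ballMajumdarPotential_convex_general
    (Q₁ Q₂ : Matrix (Fin 3) (Fin 3) ℝ)
    (t : ℝ) (ht0 : 0 ≤ t) (ht1 : t ≤ 1) :
    ballMajumdarPotential (t • Q₁ + (1 - t) • Q₂) ≤
      (t : EReal) * ballMajumdarPotential Q₁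
        + ((1 - t : ℝ) : EReal) * ballMajumdarPotential Q₂ := by
  rcases ht0.eq_or_lt with rfl | ht0
  · simp
  rcases ht1.eq_or_lt with rfl | ht1
  · simp
  have hs : 0 < 1 - t := sub_pos.2 ht1
  have hsum : t + (1 - t) = 1 := add_sub_cancel t 1
  refine EReal.le_coe_mul_sInf_add_coe_mul_sInf ht0 hs
    (ballMajumdarPotential_ne_bot Q₁) (ballMajumdarPotential_ne_bot Q₂) ?_
  rintro _ ⟨ρ₁, hρ₁, rfl⟩ _ ⟨ρ₂, hρ₂, rfl⟩
  calc ballMajumdarPotential (t • Q₁ + (1 - t) • Q₂)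
      ≤ sphereEntropy (t • ρ₁ + (1 - t) • ρ₂) := sInf_le <| mem_image_of_mem sphereEntropy <|
        smul_add_smul_mem_admissibleDensities hρ₁ hρ₂ ht0.le hs.le hsum
    _ ≤ t * sphereEntropy ρ₁ + (1 - t : ℝ) * sphereEntropy ρ₂ :=
        sphereEntropy_smul_add_smul_le hρ₁.1 hρ₂.1 hρ₁.2.1 hρ₂.2.1 ht0 hs hsum

/-- The Ball–Majumdar potential `f` is convex on symmetric traceless
`3×3` matrices: for all such `Q₁, Q₂` and `t ∈ [0,1]`,
`f(t Q₁ + (1-t) Q₂) ≤ t f(Q₁) + (1-t) f(Q₂)` in the extended reals. -/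
theorem ballMajumdarPotential_convex
    (Q₁ Q₂ : Matrix (Fin 3) (Fin 3) ℝ)
    (h₁s : Q₁.IsSymm) (h₁t : Q₁.trace = 0)
    (h₂s : Q₂.IsSymm) (h₂t : Q₂.trace = 0)
    (t : ℝ) (ht0 : 0 ≤ t) (ht1 : t ≤ 1) :
    ballMajumdarPotential (t • Q₁ + (1 - t) • Q₂) ≤
      (t : EReal) * ballMajumdarPotential Q₁
        + ((1 - t : ℝ) : EReal) * ballMajumdarPotential Q₂ :=
  ballMajumdarPotential_convex_general Q₁ Q₂ t ht0 ht1
end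

section
/- Let n ≥ 1, let α > 0 with α ≠ 1, let κ : ℝ → ℝ be continuously differentiable, and let θ : ℝⁿ → [0, ∞) be twice continuously differentiable. Then at every point of ℝⁿ the pointwise identity holds: (1 + θ)^{−α} div( κ(θ) ∇θ ) = div( κ(θ) (1 + θ)^{−α} ∇θ ) + (4α/(1 − α)²) κ(θ) | ∇( (1 + θ)^{(1−α)/2} ) |². -/
/-- The partial derivative `∂_i f (x)` of a scalar function on `ℝⁿ`. -/
noncomputable def pderiv' {n : ℕ} (i : Fin n) (f : (Fin n → ℝ) → ℝ)
    (x : Fin n → ℝ) : ℝ :=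
  fderiv ℝ f x (Pi.single i 1)

/-- The divergence `div v (x) = ∑ i ∂_i v_i (x)` of a vector field on `ℝⁿ`. -/
noncomputable def diverg {n : ℕ} (v : (Fin n → ℝ) → (Fin n → ℝ))
    (x : Fin n → ℝ) : ℝ :=
  ∑ i, pderiv' i (fun y => v y i) x

/-!
Write `s = 1 + θ`. By the product rule for the divergence,
`div(s^{-α} κ(θ) ∇θ) = s^{-α} div(κ(θ) ∇θ) - α s^{-α-1} κ(θ) |∇θ|²`, and by the chain rule
`|∇ s^{(1-α)/2}|² = ((1-α)/2)² s^{-α-1} |∇θ|²`, so the last term of the identity is exactly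
`α s^{-α-1} κ(θ) |∇θ|²` and the two correction terms cancel.
-/

section PartialDerivatives

variable {n : ℕ} {f g : (Fin n → ℝ) → ℝ} {x : Fin n → ℝ}

theorem pderiv'_mul (i : Fin n) (hf : DifferentiableAt ℝ f x) (hg : DifferentiableAt ℝ g x) :
    pderiv' i (fun y => f y * g y) x = f x * pderiv' i g x + g x * pderiv' i f x := by
  rw [pderiv', fderiv_fun_mul hf hg]
  rfl

theorem pderiv'_comp {φ : ℝ → ℝ} {φ' : ℝ} (i : Fin n) (hφ : HasDerivAt φ φ' (f x))
    (hf : DifferentiableAt ℝ f x) :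
    pderiv' i (fun y => φ (f y)) x = φ' * pderiv' i f x :=
  congrArg (fun L => L (Pi.single i 1)) (hφ.comp_hasFDerivAt x hf.hasFDerivAt).fderiv

theorem pderiv'_const_add (i : Fin n) (c : ℝ) :
    pderiv' i (fun y => c + f y) x = pderiv' i f x := by
  simp only [pderiv', fderiv_const_add]

theorem pderiv'_rpow (i : Fin n) (r : ℝ) (hf : DifferentiableAt ℝ f x) (hpos : 0 < f x) :
    pderiv' i (fun y => f y ^ r) x = r * f x ^ (r - 1) * pderiv' i f x :=
  pderiv'_comp i (Real.hasDerivAt_rpow_const (Or.inl hpos.ne')) hf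

theorem ContDiff.differentiable_pderiv' (hf : ContDiff ℝ 2 f) (i : Fin n) :
    Differentiable ℝ (pderiv' i f) := fun x =>
  ((hf.fderiv_right one_add_one_eq_two.le).differentiable one_ne_zero x).clm_apply
    (differentiableAt_const _)

theorem diverg_smul {a : (Fin n → ℝ) → ℝ} {v : (Fin n → ℝ) → (Fin n → ℝ)}
    (ha : DifferentiableAt ℝ a x) (hv : ∀ i, DifferentiableAt ℝ (fun y => v y i) x) :
    diverg (fun y i => a y * v y i) x = a x * diverg v x + ∑ i, pderiv' i a x * v x i := by
  simp only [diverg, pderiv'_mul _ ha (hv _), Finset.sum_add_distrib, Finset.mul_sum, mul_comm]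

end PartialDerivatives

theorem temperature_gradient_identity_general (n : ℕ)
    (α : ℝ) (hα1 : α ≠ 1)
    (κ : ℝ → ℝ) (hκ : ContDiff ℝ 1 κ)
    (θ : (Fin n → ℝ) → ℝ) (hθ : ContDiff ℝ 2 θ) (hθ0 : ∀ x, 0 ≤ θ x) :
    ∀ x : Fin n → ℝ,
      (1 + θ x) ^ (-α) * diverg (fun y i => κ (θ y) * pderiv' i θ y) x
        = diverg (fun y i => κ (θ y) * (1 + θ y) ^ (-α) * pderiv' i θ y) x
          + (4 * α / (1 - α) ^ 2) * κ (θ x)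
            * ∑ i, (pderiv' i (fun y => (1 + θ y) ^ ((1 - α) / 2)) x) ^ 2 := by
  intro x
  have hs : 0 < 1 + θ x := by linarith [hθ0 x]
  have hθd : Differentiable ℝ (fun y => 1 + θ y) := (hθ.differentiable two_ne_zero).const_add 1
  have hflux (i : Fin n) : DifferentiableAt ℝ (fun y => κ (θ y) * pderiv' i θ y) x :=
    ((hκ.differentiable one_ne_zero _).comp x (hθ.differentiable two_ne_zero x)).mul
      (hθ.differentiable_pderiv' i x)
  have hweight : (fun y i => κ (θ y) * (1 + θ y) ^ (-α) * pderiv' i θ y)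
      = fun y i => (1 + θ y) ^ (-α) * (κ (θ y) * pderiv' i θ y) := by
    ext y i; ring
  rw [hweight, diverg_smul ((hθd x).rpow_const (Or.inl hs.ne')) hflux]
  simp only [pderiv'_rpow _ _ (hθd x) hs, pderiv'_const_add]
  have hsq : ((1 + θ x) ^ ((1 - α) / 2 - 1)) ^ 2 = (1 + θ x) ^ (-α - 1) := by
    rw [← Real.rpow_mul_natCast hs.le]
    ring_nf
  have h1α : 1 - α ≠ 0 := sub_ne_zero.mpr hα1.symm
  rw [Finset.mul_sum, add_assoc, ← Finset.sum_add_distrib, Finset.sum_eq_zero, add_zero]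
  intro i _
  rw [mul_pow, mul_pow, hsq]
  field_simp
  ring

/-- For `n ≥ 1`, `α > 0`, `α ≠ 1`, `κ ∈ C¹(ℝ)` and `θ ∈ C²(ℝⁿ)`
nonnegative, at every point of `ℝⁿ`:
`(1+θ)^{-α} div(κ(θ) ∇θ)
  = div(κ(θ) (1+θ)^{-α} ∇θ) + (4α/(1-α)²) κ(θ) |∇((1+θ)^{(1-α)/2})|²`. -/
theorem temperature_gradient_identity (n : ℕ) (hn : 1 ≤ n)
    (α : ℝ) (hα : 0 < α) (hα1 : α ≠ 1)
    (κ : ℝ → ℝ) (hκ : ContDiff ℝ 1 κ)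
    (θ : (Fin n → ℝ) → ℝ) (hθ : ContDiff ℝ 2 θ) (hθ0 : ∀ x, 0 ≤ θ x) :
    ∀ x : Fin n → ℝ,
      (1 + θ x) ^ (-α) * diverg (fun y i => κ (θ y) * pderiv' i θ y) x
        = diverg (fun y i => κ (θ y) * (1 + θ y) ^ (-α) * pderiv' i θ y) x
          + (4 * α / (1 - α) ^ 2) * κ (θ x)
            * ∑ i, (pderiv' i (fun y => (1 + θ y) ^ ((1 - α) / 2)) x) ^ 2 :=
  temperature_gradient_identity_general n α hα1 κ hκ θ hθ hθ0
end

section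
/- Let u : ℝ³ → ℝ³ be a smooth compactly supported vector field with div u = 0, and let Q : ℝ³ → M₃(ℝ) be a smooth matrix-valued map. Then ∫_{ℝ³} ( (u · ∇) Q ) : ΔQ dx + ∫_{ℝ³} ( ∇Q ⊙ ∇Q ) : ∇u dx = 0, where ((u·∇)Q) : ΔQ = Σ_{j,k,l} u_j (∂_j Q_{kl}) (ΔQ_{kl}), (∇Q ⊙ ∇Q)_{ij} = Σ_{k,l} (∂_i Q_{kl})(∂_j Q_{kl}), and (∇Q ⊙ ∇Q) : ∇u = Σ_{i,j} (∇Q ⊙ ∇Q)_{ij} ∂_j u_i. -/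
open MeasureTheory

/-- The partial derivative `∂_i f (x)` of a scalar function on `ℝ³`. -/
noncomputable def pd3 (i : Fin 3) (f : (Fin 3 → ℝ) → ℝ) (x : Fin 3 → ℝ) : ℝ :=
  fderiv ℝ f x (Pi.single i 1)

/-- The Laplacian `Δf (x) = ∑ i ∂_i ∂_i f (x)` of a scalar function on `ℝ³`. -/
noncomputable def lap3 (f : (Fin 3 → ℝ) → ℝ) (x : Fin 3 → ℝ) : ℝ :=
  ∑ i, pd3 i (fun y => pd3 i f y) x

set_option maxHeartbeats 1000000

lemma contDiff_pd3 {f : (Fin 3 → ℝ) → ℝ} (hf : ContDiff ℝ (⊤ : ℕ∞) f) (i : Fin 3) :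
    ContDiff ℝ (⊤ : ℕ∞) (pd3 i f) := by
  have h := hf.fderiv_right (m := (⊤ : ℕ∞)) (by simp)
  exact (ContinuousLinearMap.apply ℝ ℝ (Pi.single i 1)).contDiff.comp h

lemma hcs_pd3 {f : (Fin 3 → ℝ) → ℝ} (hf : HasCompactSupport f) (i : Fin 3) :
    HasCompactSupport (pd3 i f) :=
  hf.fderiv_apply ℝ (Pi.single i 1)

lemma pd3_mul {f g : (Fin 3 → ℝ) → ℝ} (hf : Differentiable ℝ f) (hg : Differentiable ℝ g)
    (i : Fin 3) (x : Fin 3 → ℝ) :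
    pd3 i (fun y => f y * g y) x = pd3 i f x * g x + f x * pd3 i g x := by
  unfold pd3
  rw [fderiv_fun_mul (hf x) (hg x)]
  simp only [ContinuousLinearMap.add_apply, ContinuousLinearMap.smul_apply, smul_eq_mul]
  ring

lemma pd3_comm {f : (Fin 3 → ℝ) → ℝ} (hf : ContDiff ℝ (⊤ : ℕ∞) f) (i j : Fin 3) (x : Fin 3 → ℝ) :
    pd3 i (fun y => pd3 j f y) x = pd3 j (fun y => pd3 i f y) x := by
  have hd : ∀ y, HasFDerivAt f (fderiv ℝ f y) y :=
    fun y => (hf.differentiable (by simp) y).hasFDerivAt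
  have h2 : HasFDerivAt (fderiv ℝ f) (fderiv ℝ (fderiv ℝ f) x) x :=
    (((hf.fderiv_right (m := (⊤ : ℕ∞)) (by simp)).differentiable (by simp)) x).hasFDerivAt
  have hsymm := second_derivative_symmetric hd h2
  have ev : ∀ v w : Fin 3 → ℝ,
      fderiv ℝ (fun y => fderiv ℝ f y w) x v = fderiv ℝ (fderiv ℝ f) x v w := by
    intro v w
    have := ((ContinuousLinearMap.apply ℝ ℝ w).hasFDerivAt.comp x h2).fderiv
    rw [show (fun y => fderiv ℝ f y w) = (ContinuousLinearMap.apply ℝ ℝ w) ∘ (fderiv ℝ f) from rfl,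
      this]
    rfl
  show fderiv ℝ (fun y => fderiv ℝ f y (Pi.single j 1)) x (Pi.single i 1)
      = fderiv ℝ (fun y => fderiv ℝ f y (Pi.single i 1)) x (Pi.single j 1)
  rw [ev, ev, hsymm]

lemma integral_pd3 {f : (Fin 3 → ℝ) → ℝ} (hf : ContDiff ℝ (⊤ : ℕ∞) f)
    (hsupp : HasCompactSupport f) (i : Fin 3) : ∫ x, pd3 i f x = 0 := by
  obtain ⟨C, hC⟩ := hf.lipschitzWith_of_hasCompactSupport hsupp (by simp)
  have hone : LipschitzWith 0 (fun _ : Fin 3 → ℝ => (1 : ℝ)) := LipschitzWith.const' 1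
  have key := LipschitzWith.integral_lineDeriv_mul_eq (μ := volume) hone hC hsupp
      (Pi.single i 1)
  have hz : ∀ x : Fin 3 → ℝ, lineDeriv ℝ (fun _ : Fin 3 → ℝ => (1:ℝ)) x (Pi.single i 1) = 0 := by
    intro x
    rw [(differentiableAt_const (1:ℝ)).lineDeriv_eq_fderiv]
    simp
  simp only [hz, zero_mul, integral_zero, mul_one] at key
  have : ∀ x, lineDeriv ℝ f x (-(Pi.single i 1)) = -pd3 i f x := by
    intro x
    rw [(hf.differentiable (by simp) x).lineDeriv_eq_fderiv]
    simp [pd3]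
  simp only [this, integral_neg] at key
  linarith

lemma integrable_cs {f : (Fin 3 → ℝ) → ℝ} (hf : ContDiff ℝ (⊤ : ℕ∞) f)
    (hsupp : HasCompactSupport f) : Integrable f :=
  hf.continuous.integrable_of_hasCompactSupport hsupp

lemma integral_pd3_mul {f g : (Fin 3 → ℝ) → ℝ} (hf : ContDiff ℝ (⊤ : ℕ∞) f) (hg : ContDiff ℝ (⊤ : ℕ∞) g)
    (hfs : HasCompactSupport f) (i : Fin 3) :
    ∫ x, f x * pd3 i g x = - ∫ x, pd3 i f x * g x := by
  have h1 : ∀ x, pd3 i (fun y => f y * g y) x = pd3 i f x * g x + f x * pd3 i g x :=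
    pd3_mul (hf.differentiable (by simp)) (hg.differentiable (by simp)) i
  have h0 := integral_pd3 (hf.mul hg) (hfs.mul_right) i
  simp only [h1] at h0
  have I1 : Integrable (fun x => pd3 i f x * g x) :=
    integrable_cs ((contDiff_pd3 hf i).mul hg) ((hcs_pd3 hfs i).mul_right)
  have I2 : Integrable (fun x => f x * pd3 i g x) :=
    integrable_cs (hf.mul (contDiff_pd3 hg i)) (hfs.mul_right)
  rw [integral_add I1 I2] at h0
  linarith

lemma master {u : (Fin 3 → ℝ) → (Fin 3 → ℝ)}
    (hu : ContDiff ℝ (⊤ : ℕ∞) u) (husupp : HasCompactSupport u)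
    (hdiv : ∀ x, ∑ j, pd3 j (fun y => u y j) x = 0)
    {f : (Fin 3 → ℝ) → ℝ} (hf : ContDiff ℝ (⊤ : ℕ∞) f) :
    ∑ j, ∑ i : Fin 3, ∫ x, u x j * pd3 j f x * pd3 i (fun y => pd3 i f y) x
      = - ∑ i : Fin 3, ∑ j : Fin 3, ∫ x, pd3 i (fun y => u y j) x * pd3 j f x * pd3 i f x := by
  have hU : ∀ j, ContDiff ℝ (⊤ : ℕ∞) (fun y => u y j) := fun j =>
    (ContinuousLinearMap.proj (R := ℝ) (φ := fun _ : Fin 3 => ℝ) j).contDiff.comp hu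
  have hUc : ∀ j, HasCompactSupport (fun y => u y j) := fun j =>
    husupp.comp_left (g := fun v : Fin 3 → ℝ => v j) rfl
  have hP : ∀ i, ContDiff ℝ (⊤ : ℕ∞) (fun y => pd3 i f y) := fun i => contDiff_pd3 hf i
  have IntX : ∀ i j : Fin 3, Integrable (fun x => pd3 i (fun y => u y j) x * pd3 j f x * pd3 i f x) :=
    fun i j => integrable_cs (((contDiff_pd3 (hU j) i).mul (hP j)).mul (hP i))
      (((hcs_pd3 (hUc j) i).mul_right).mul_right)
  have IntT : ∀ i j : Fin 3, Integrable (fun x => u x j * pd3 j (fun y => pd3 i f y) x * pd3 i f x) :=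
    fun i j => integrable_cs (((hU j).mul (contDiff_pd3 (hP i) j)).mul (hP i))
      (((hUc j).mul_right).mul_right)
  have step1 : ∀ j i : Fin 3, ∫ x, u x j * pd3 j f x * pd3 i (fun y => pd3 i f y) x
      = - (∫ x, pd3 i (fun y => u y j) x * pd3 j f x * pd3 i f x)
        - ∫ x, u x j * pd3 j (fun y => pd3 i f y) x * pd3 i f x := by
    intro j i
    have hg : ContDiff ℝ (⊤ : ℕ∞) (fun x => u x j * pd3 j f x) := (hU j).mul (hP j)
    have hgc : HasCompactSupport (fun x => u x j * pd3 j f x) := (hUc j).mul_right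
    rw [integral_pd3_mul hg (hP i) hgc i]
    have e2 : ∀ x, pd3 i (fun x => u x j * pd3 j f x) x * pd3 i f x
        = pd3 i (fun y => u y j) x * pd3 j f x * pd3 i f x
          + u x j * pd3 j (fun y => pd3 i f y) x * pd3 i f x := by
      intro x
      rw [pd3_mul ((hU j).differentiable (by simp))
        ((hP j).differentiable (by simp)) i x, pd3_comm hf i j x]
      ring
    simp only [e2]
    rw [integral_add (IntX i j) (IntT i j)]
    ring
  have step2 : ∀ i : Fin 3,
      ∑ j : Fin 3, ∫ x, u x j * pd3 j (fun y => pd3 i f y) x * pd3 i f x = 0 := by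
    intro i
    have IntA : ∀ j : Fin 3,
        Integrable (fun x => pd3 j (fun y => u y j) x * pd3 i f x * pd3 i f x) :=
      fun j => integrable_cs (((contDiff_pd3 (hU j) j).mul (hP i)).mul (hP i))
        (((hcs_pd3 (hUc j) j).mul_right).mul_right)
    have hT : ∀ j : Fin 3, ∫ x, u x j * pd3 j (fun y => pd3 i f y) x * pd3 i f x
        = - (∫ x, pd3 j (fun y => u y j) x * pd3 i f x * pd3 i f x)
          - ∫ x, u x j * pd3 j (fun y => pd3 i f y) x * pd3 i f x := by
      intro j
      have e1 : (fun x => u x j * pd3 j (fun y => pd3 i f y) x * pd3 i f x)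
          = fun x => (u x j * pd3 i f x) * pd3 j (fun y => pd3 i f y) x := by
        funext x; ring
      conv_lhs => rw [e1]
      rw [integral_pd3_mul ((hU j).mul (hP i)) (hP i) ((hUc j).mul_right) j]
      have e2 : ∀ x, pd3 j (fun x => u x j * pd3 i f x) x * pd3 i f x
          = pd3 j (fun y => u y j) x * pd3 i f x * pd3 i f x
            + u x j * pd3 j (fun y => pd3 i f y) x * pd3 i f x := by
        intro x
        rw [pd3_mul ((hU j).differentiable (by simp))
          ((hP i).differentiable (by simp)) j x]
        ring
      simp only [e2]
      rw [integral_add (IntA j) (IntT i j)]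
      ring
    have h3 : ∑ j : Fin 3, ∫ x, pd3 j (fun y => u y j) x * pd3 i f x * pd3 i f x = 0 := by
      rw [← integral_finset_sum _ (fun j _ => IntA j)]
      have e : ∀ x, (∑ j : Fin 3, pd3 j (fun y => u y j) x * pd3 i f x * pd3 i f x) = 0 := by
        intro x
        rw [← Finset.sum_mul, ← Finset.sum_mul, hdiv x, zero_mul, zero_mul]
      simp only [e, integral_zero]
    have e := Finset.sum_congr rfl (fun j (_ : j ∈ Finset.univ) => hT j)
    rw [Finset.sum_sub_distrib, Finset.sum_neg_distrib] at e
    rw [h3] at e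
    linarith
  calc ∑ j, ∑ i : Fin 3, ∫ x, u x j * pd3 j f x * pd3 i (fun y => pd3 i f y) x
      = ∑ j : Fin 3, ∑ i : Fin 3,
          (- (∫ x, pd3 i (fun y => u y j) x * pd3 j f x * pd3 i f x)
            - ∫ x, u x j * pd3 j (fun y => pd3 i f y) x * pd3 i f x) :=
        Finset.sum_congr rfl fun j _ => Finset.sum_congr rfl fun i _ => step1 j i
    _ = ∑ i : Fin 3, ∑ j : Fin 3,
          (- (∫ x, pd3 i (fun y => u y j) x * pd3 j f x * pd3 i f x)
            - ∫ x, u x j * pd3 j (fun y => pd3 i f y) x * pd3 i f x) :=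
        Finset.sum_comm
    _ = - ∑ i : Fin 3, ∑ j : Fin 3, ∫ x, pd3 i (fun y => u y j) x * pd3 j f x * pd3 i f x := by
        rw [← Finset.sum_neg_distrib]
        refine Finset.sum_congr rfl fun i _ => ?_
        rw [Finset.sum_sub_distrib, Finset.sum_neg_distrib, step2 i, sub_zero]

lemma sum3_rot (h : Fin 3 → Fin 3 → Fin 3 → ℝ) :
    ∑ i, ∑ j, ∑ l, h i j l = ∑ l, ∑ i, ∑ j, h i j l :=
  (Finset.sum_congr rfl fun _ _ => Finset.sum_comm).trans Finset.sum_comm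

lemma sum4_swap (g : Fin 3 → Fin 3 → Fin 3 → Fin 3 → ℝ) :
    ∑ i, ∑ j, ∑ k, ∑ l, g i j k l = ∑ k, ∑ l, ∑ i, ∑ j, g i j k l := by
  calc ∑ i, ∑ j, ∑ k, ∑ l, g i j k l
      = ∑ i, ∑ k, ∑ l, ∑ j, g i j k l :=
        Finset.sum_congr rfl fun i _ => (sum3_rot _).trans (sum3_rot _)
    _ = ∑ k, ∑ l, ∑ i, ∑ j, g i j k l := (sum3_rot _).trans (sum3_rot _)


/-- For a smooth, compactly supported, divergence-free vector field
`u : ℝ³ → ℝ³` and a smooth matrix-valued map `Q : ℝ³ → M₃(ℝ)`: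
`∫ ((u·∇)Q) : ΔQ dx + ∫ (∇Q ⊙ ∇Q) : ∇u dx = 0`, where
`((u·∇)Q) : ΔQ = Σ_{j,k,l} u_j (∂_j Q_{kl}) (ΔQ_{kl})`,
`(∇Q ⊙ ∇Q)_{ij} = Σ_{k,l} (∂_i Q_{kl})(∂_j Q_{kl})` and
`(∇Q ⊙ ∇Q) : ∇u = Σ_{i,j} (∇Q ⊙ ∇Q)_{ij} ∂_j u_i`. -/
theorem convective_laplacian_integral_identity
    (u : (Fin 3 → ℝ) → (Fin 3 → ℝ))
    (hu : ContDiff ℝ (⊤ : ℕ∞) u) (husupp : HasCompactSupport u)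
    (hdiv : ∀ x, ∑ i, pd3 i (fun y => u y i) x = 0)
    (Q : (Fin 3 → ℝ) → Matrix (Fin 3) (Fin 3) ℝ)
    (hQ : ∀ k l, ContDiff ℝ (⊤ : ℕ∞) (fun y => Q y k l)) :
    (∫ x : Fin 3 → ℝ,
        ∑ j, ∑ k, ∑ l, u x j * pd3 j (fun y => Q y k l) x * lap3 (fun y => Q y k l) x)
      + (∫ x : Fin 3 → ℝ,
          ∑ i, ∑ j,
            (∑ k, ∑ l, pd3 i (fun y => Q y k l) x * pd3 j (fun y => Q y k l) x)
              * pd3 j (fun y => u y i) x) = 0 := by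
  have hU : ∀ j, ContDiff ℝ (⊤ : ℕ∞) (fun y => u y j) := fun j =>
    (ContinuousLinearMap.proj (R := ℝ) (φ := fun _ : Fin 3 => ℝ) j).contDiff.comp hu
  have hUc : ∀ j, HasCompactSupport (fun y => u y j) := fun j =>
    husupp.comp_left (g := fun v : Fin 3 → ℝ => v j) rfl
  have hP : ∀ (i : Fin 3) (k l : Fin 3), ContDiff ℝ (⊤ : ℕ∞) (fun y => pd3 i (fun z => Q z k l) y) :=
    fun i k l => contDiff_pd3 (hQ k l) i
  have hlap : ∀ k l, ContDiff ℝ (⊤ : ℕ∞) (fun x => lap3 (fun y => Q y k l) x) := by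
    intro k l
    unfold lap3
    exact ContDiff.sum fun i _ => contDiff_pd3 (contDiff_pd3 (hQ k l) i) i
  have IntB : ∀ j k l : Fin 3, Integrable (fun x =>
      u x j * pd3 j (fun y => Q y k l) x * lap3 (fun y => Q y k l) x) :=
    fun j k l => integrable_cs (((hU j).mul (hP j k l)).mul (hlap k l))
      (((hUc j).mul_right).mul_right)
  have IntBi : ∀ j i k l : Fin 3, Integrable (fun x =>
      u x j * pd3 j (fun y => Q y k l) x
        * pd3 i (fun y => pd3 i (fun z => Q z k l) y) x) :=
    fun j i k l => integrable_cs (((hU j).mul (hP j k l)).mul (contDiff_pd3 (hP i k l) i))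
      (((hUc j).mul_right).mul_right)
  have IntG : ∀ i j k l : Fin 3, Integrable (fun x =>
      pd3 i (fun y => Q y k l) x * pd3 j (fun y => Q y k l) x * pd3 j (fun y => u y i) x) :=
    fun i j k l => integrable_cs (((hP i k l).mul (hP j k l)).mul (contDiff_pd3 (hU i) j))
      ((hcs_pd3 (hUc i) j).mul_left)
  -- transform the first integral
  have T1 : (∫ x : Fin 3 → ℝ,
        ∑ j, ∑ k, ∑ l, u x j * pd3 j (fun y => Q y k l) x * lap3 (fun y => Q y k l) x)
      = ∑ j : Fin 3, ∑ k : Fin 3, ∑ l : Fin 3,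
          ∫ x, u x j * pd3 j (fun y => Q y k l) x * lap3 (fun y => Q y k l) x := by
    rw [integral_finset_sum _ (fun j _ => integrable_finset_sum _
      (fun k _ => integrable_finset_sum _ (fun l _ => IntB j k l)))]
    refine Finset.sum_congr rfl fun j _ => ?_
    rw [integral_finset_sum _ (fun k _ => integrable_finset_sum _ (fun l _ => IntB j k l))]
    exact Finset.sum_congr rfl fun k _ => integral_finset_sum _ (fun l _ => IntB j k l)
  -- transform the second integral
  have T2 : (∫ x : Fin 3 → ℝ,
        ∑ i, ∑ j, (∑ k, ∑ l, pd3 i (fun y => Q y k l) x * pd3 j (fun y => Q y k l) x)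
          * pd3 j (fun y => u y i) x)
      = ∑ i : Fin 3, ∑ j : Fin 3, ∑ k : Fin 3, ∑ l : Fin 3,
          ∫ x, pd3 i (fun y => Q y k l) x * pd3 j (fun y => Q y k l) x
            * pd3 j (fun y => u y i) x := by
    have e2 : ∀ x : Fin 3 → ℝ,
        (∑ i : Fin 3, ∑ j : Fin 3, (∑ k : Fin 3, ∑ l : Fin 3,
            pd3 i (fun y => Q y k l) x * pd3 j (fun y => Q y k l) x)
          * pd3 j (fun y => u y i) x)
        = ∑ i : Fin 3, ∑ j : Fin 3, ∑ k : Fin 3, ∑ l : Fin 3,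
            pd3 i (fun y => Q y k l) x * pd3 j (fun y => Q y k l) x
              * pd3 j (fun y => u y i) x := by
      intro x
      refine Finset.sum_congr rfl fun i _ => Finset.sum_congr rfl fun j _ => ?_
      rw [Finset.sum_mul]
      exact Finset.sum_congr rfl fun k _ => Finset.sum_mul _ _ _
    simp only [e2]
    rw [integral_finset_sum _ (fun i _ => integrable_finset_sum _ (fun j _ =>
      integrable_finset_sum _ (fun k _ => integrable_finset_sum _ (fun l _ => IntG i j k l))))]
    refine Finset.sum_congr rfl fun i _ => ?_
    rw [integral_finset_sum _ (fun j _ => integrable_finset_sum _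
      (fun k _ => integrable_finset_sum _ (fun l _ => IntG i j k l)))]
    refine Finset.sum_congr rfl fun j _ => ?_
    rw [integral_finset_sum _ (fun k _ => integrable_finset_sum _ (fun l _ => IntG i j k l))]
    exact Finset.sum_congr rfl fun k _ => integral_finset_sum _ (fun l _ => IntG i j k l)
  rw [T1, T2, (sum3_rot _).trans (sum3_rot _), sum4_swap, ← Finset.sum_add_distrib]
  refine Finset.sum_eq_zero fun k _ => ?_
  rw [← Finset.sum_add_distrib]
  refine Finset.sum_eq_zero fun l _ => ?_
  -- per (k, l) : use the master identity
  have eB : ∀ j : Fin 3,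
      (∫ x, u x j * pd3 j (fun y => Q y k l) x * lap3 (fun y => Q y k l) x)
      = ∑ i : Fin 3, ∫ x, u x j * pd3 j (fun y => Q y k l) x
          * pd3 i (fun y => pd3 i (fun z => Q z k l) y) x := by
    intro j
    have e : (fun x => u x j * pd3 j (fun y => Q y k l) x * lap3 (fun y => Q y k l) x)
        = fun x => ∑ i : Fin 3, u x j * pd3 j (fun y => Q y k l) x
            * pd3 i (fun y => pd3 i (fun z => Q z k l) y) x := by
      funext x
      simp only [lap3, Finset.mul_sum]
    rw [e, integral_finset_sum _ (fun i _ => IntBi j i k l)]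
  have hmaster := master hu husupp hdiv (hQ k l)
  have eG : (∑ i : Fin 3, ∑ j : Fin 3,
        ∫ x, pd3 i (fun y => Q y k l) x * pd3 j (fun y => Q y k l) x
          * pd3 j (fun y => u y i) x)
      = ∑ i : Fin 3, ∑ j : Fin 3,
          ∫ x, pd3 i (fun y => u y j) x * pd3 j (fun z => Q z k l) x
            * pd3 i (fun z => Q z k l) x := by
    rw [Finset.sum_comm]
    refine Finset.sum_congr rfl fun i _ => Finset.sum_congr rfl fun j _ => ?_
    have e : (fun x => pd3 j (fun y => Q y k l) x * pd3 i (fun y => Q y k l) x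
          * pd3 i (fun y => u y j) x)
        = fun x => pd3 i (fun y => u y j) x * pd3 j (fun z => Q z k l) x
            * pd3 i (fun z => Q z k l) x := by
      funext x; ring
    rw [e]
  rw [Finset.sum_congr rfl fun j _ => eB j, hmaster, eG, neg_add_cancel]
end

section
/- Let (X, μ) be a finite measure space, let K ≥ 0, and let (f_m)_{m ∈ ℕ} be a nondecreasing sequence of continuous functions f_m : ℝ^d → [−K, ∞) converging pointwise to a function f : ℝ^d → [−K, +∞]. Let g_m : X → ℝ^d be measurable with g_m → g μ-almost everywhere, and suppose there is c ∈ ℝ with ∫_X f_m(g_m(x)) dμ(x) ≤ c for all m. Then f ∘ g is integrable in the extended sense and ∫_X f(g(x)) dμ(x) ≤ c. -/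
/-!
For a fixed `m`, continuity of `f m` and Fatou's lemma give
`∫ f m (G x) ≤ liminf_n ∫ f m (g n x)`, and for `n ≥ m` monotonicity bounds
`∫ f m (g n x) ≤ ∫ f n (g n x) ≤ c`. Since `F` is the supremum of the `f m`, monotone
convergence in `m` then bounds `∫ F (G x)` by `c`.
-/

open MeasureTheory Filter

attribute [local instance] Classical.propDecidable

noncomputable def erealToENNReal (x : EReal) : ENNReal :=
  if x = ⊤ then ⊤ else ENNReal.ofReal x.toReal

theorem erealToENNReal_eq_toENNReal : erealToENNReal = EReal.toENNReal := by
  funext x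
  unfold erealToENNReal EReal.toENNReal
  congr

open Topology
open scoped ENNReal

theorem EReal.toENNReal_add_coe_le_iSup {ι : Type*} {l : Filter ι} [l.NeBot] {u : ι → ℝ}
    {L : EReal} (hu : Tendsto (fun i => (u i : EReal)) l (𝓝 L)) (K : ℝ) :
    (L + K).toENNReal ≤ ⨆ i, ENNReal.ofReal (u i + K) := by
  have hadd : Tendsto (fun i => ((u i + K : ℝ) : EReal)) l (𝓝 (L + K)) := by
    simpa only [EReal.coe_add, Function.comp_def] using
      (EReal.continuousAt_add (p := (L, (K : EReal))) (.inr (EReal.coe_ne_bot K))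
        (.inr (EReal.coe_ne_top K))).tendsto.comp (hu.prodMk_nhds tendsto_const_nhds)
  exact le_of_tendsto' ((EReal.continuous_toENNReal.tendsto _).comp hadd) fun i =>
    le_iSup (fun i => ENNReal.ofReal (u i + K)) i

section Fatou

variable {X Y : Type*} [MeasurableSpace X] [TopologicalSpace Y] [MeasurableSpace Y]
  [OpensMeasurableSpace Y] {μ : Measure X} {g : ℕ → X → Y} {G : X → Y}

theorem lintegral_comp_le_liminf_of_tendsto_ae {φ : Y → ℝ≥0∞} (hφ : Continuous φ)
    (hg : ∀ n, Measurable (g n)) (hae : ∀ᵐ x ∂μ, Tendsto (fun n => g n x) atTop (𝓝 (G x))) :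
    ∫⁻ x, φ (G x) ∂μ ≤ liminf (fun n => ∫⁻ x, φ (g n x) ∂μ) atTop :=
  calc ∫⁻ x, φ (G x) ∂μ = ∫⁻ x, liminf (fun n => φ (g n x)) atTop ∂μ :=
        lintegral_congr_ae <| hae.mono fun _ hx => ((hφ.tendsto _).comp hx).liminf_eq.symm
    _ ≤ liminf (fun n => ∫⁻ x, φ (g n x) ∂μ) atTop :=
        lintegral_liminf_le fun n => hφ.measurable.comp (hg n)

theorem lintegral_iSup_comp_le_of_tendsto_ae {φ : ℕ → Y → ℝ≥0∞} (hφ : ∀ m, Continuous (φ m))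
    (hφ_mono : Monotone φ) (hg : ∀ n, Measurable (g n)) (hG : Measurable G)
    (hae : ∀ᵐ x ∂μ, Tendsto (fun n => g n x) atTop (𝓝 (G x))) {B : ℝ≥0∞}
    (hB : ∀ n, ∫⁻ x, φ n (g n x) ∂μ ≤ B) :
    ∫⁻ x, ⨆ m, φ m (G x) ∂μ ≤ B := by
  refine (lintegral_iSup (f := fun m x => φ m (G x)) (fun m => (hφ m).measurable.comp hG)
    fun _ _ h x => hφ_mono h (G x)).trans_le (iSup_le fun m => ?_)
  calc ∫⁻ x, φ m (G x) ∂μ ≤ liminf (fun n => ∫⁻ x, φ m (g n x) ∂μ) atTop :=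
        lintegral_comp_le_liminf_of_tendsto_ae (hφ m) hg hae
    _ ≤ B := liminf_le_of_frequently_le' <| (eventually_ge_atTop m).frequently.mono fun n hn =>
        (lintegral_mono fun x => hφ_mono hn (g n x)).trans (hB n)

end Fatou

theorem fatou_singular_potential_general {X : Type*} [MeasurableSpace X]
    (μ : Measure X)
    {d : ℕ} (K : ℝ)
    (f : ℕ → (Fin d → ℝ) → ℝ)
    (hfc : ∀ m, Continuous (f m))
    (hmono : ∀ m y, f m y ≤ f (m + 1) y)
    (F : (Fin d → ℝ) → EReal)
    (hconv : ∀ y, Tendsto (fun m => ((f m y : ℝ) : EReal)) atTop (nhds (F y)))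
    (g : ℕ → X → (Fin d → ℝ)) (hg : ∀ m, Measurable (g m))
    (G : X → (Fin d → ℝ)) (hG : Measurable G)
    (hae : ∀ᵐ x ∂μ, Tendsto (fun m => g m x) atTop (nhds (G x)))
    (c : ℝ)
    (hint : ∀ m, ∫⁻ x, ENNReal.ofReal (f m (g m x) + K) ∂μ
      ≤ ENNReal.ofReal (c + K * (μ Set.univ).toReal)) :
    ∫⁻ x, erealToENNReal (F (G x) + (K : EReal)) ∂μ
      ≤ ENNReal.ofReal (c + K * (μ Set.univ).toReal) := by
  rw [erealToENNReal_eq_toENNReal]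
  have hshift_mono : Monotone fun m y => ENNReal.ofReal (f m y + K) :=
    monotone_nat_of_le_succ fun m y => ENNReal.ofReal_le_ofReal (add_le_add_left (hmono m y) K)
  calc ∫⁻ x, (F (G x) + (K : EReal)).toENNReal ∂μ
      ≤ ∫⁻ x, ⨆ m, ENNReal.ofReal (f m (G x) + K) ∂μ :=
        lintegral_mono fun x => EReal.toENNReal_add_coe_le_iSup (hconv (G x)) K
    _ ≤ ENNReal.ofReal (c + K * (μ Set.univ).toReal) :=
        lintegral_iSup_comp_le_of_tendsto_ae
          (fun m => ENNReal.continuous_ofReal.comp ((hfc m).add continuous_const))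
          hshift_mono hg hG hae hint

/-- Let `(X, μ)` be a finite measure space, `K ≥ 0`, and let
`(f_m)` be a nondecreasing sequence of continuous functions `ℝ^d → [-K, ∞)` converging
pointwise to `F : ℝ^d → [-K, +∞]`.  Let `g_m : X → ℝ^d` be measurable with `g_m → G`
`μ`-a.e., and suppose `∫ f_m(g_m) dμ ≤ c` for all `m` (the extended-sense integral of
a function `h ≥ -K` being encoded by `∫⁻ (h + K) dμ ≤ c + K μ(X)`).  Then `F ∘ G` is
integrable in the extended sense with `∫ F(G x) dμ ≤ c`, i.e.
`∫⁻ (F(G x) + K) dμ ≤ c + K μ(X)`. -/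
theorem fatou_singular_potential {X : Type*} [MeasurableSpace X]
    (μ : Measure X) [IsFiniteMeasure μ]
    {d : ℕ} (K : ℝ) (hK : 0 ≤ K)
    (f : ℕ → (Fin d → ℝ) → ℝ)
    (hfc : ∀ m, Continuous (f m))
    (hflb : ∀ m y, -K ≤ f m y)
    (hmono : ∀ m y, f m y ≤ f (m + 1) y)
    (F : (Fin d → ℝ) → EReal)
    (hconv : ∀ y, Tendsto (fun m => ((f m y : ℝ) : EReal)) atTop (nhds (F y)))
    (g : ℕ → X → (Fin d → ℝ)) (hg : ∀ m, Measurable (g m))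
    (G : X → (Fin d → ℝ)) (hG : Measurable G)
    (hae : ∀ᵐ x ∂μ, Tendsto (fun m => g m x) atTop (nhds (G x)))
    (c : ℝ)
    (hint : ∀ m, ∫⁻ x, ENNReal.ofReal (f m (g m x) + K) ∂μ
      ≤ ENNReal.ofReal (c + K * (μ Set.univ).toReal)) :
    ∫⁻ x, erealToENNReal (F (G x) + (K : EReal)) ∂μ
      ≤ ENNReal.ofReal (c + K * (μ Set.univ).toReal) :=
  fatou_singular_potential_general μ K f hfc hmono F hconv g hg G hG hae c hint
end
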